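/- Invariance properties (Lemma 2.1): Let F : ℝ → ℝ be completely monotone and assume the summability hypothesis for E_κ. Then for every κ ∈ [0,1] and every z ∈ H: E_κ(z + 2) = E_κ(z), E_κ(−1/z) = E_κ(z), and E_κ(−conj(z)) = E_κ(z) (invariance under the group generated by τ ↦ τ+2, τ ↦ −1/τ, τ ↦ −conj(τ)). Moreover, for κ = 1 one additionally has E₁(z + 1) = E₁(z) for every z ∈ H. -/

import Mathlib

open scoped Real

noncomputable section

/-- A function `F : ℝ → ℝ` is completely monotone if it is `C^∞` on `(0,∞)` and
`(-1)^j F^{(j)}(x) > 0` for all `j ≥ 0` and `x > 0`. -/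
def CompletelyMonotone (F : ℝ → ℝ) : Prop :=
  ContDiffOn ℝ (⊤ : ℕ∞) F (Set.Ioi 0) ∧
  ∀ (j : ℕ) (x : ℝ), 0 < x →
    0 < (-1 : ℝ) ^ j * iteratedDerivWithin j F (Set.Ioi 0) x

/-- The energy `E₀(z) = Σ_{(m,n)≠(0,0)} F(π/(2y)·|m(z+1)+2n|²)`. -/
def latE0 (F : ℝ → ℝ) (z : ℂ) : ℝ :=
  ∑' p : {p : ℤ × ℤ // p ≠ 0},
    F (Real.pi / (2 * z.im) * ‖(p.1.1 : ℂ) * (z + 1) + 2 * (p.1.2 : ℂ)‖ ^ 2)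

/-- The energy `E₁(z) = Σ_{(m,n)≠(0,0)} F(π/y·|mz+n|²)`. -/
def latE1 (F : ℝ → ℝ) (z : ℂ) : ℝ :=
  ∑' p : {p : ℤ × ℤ // p ≠ 0},
    F (Real.pi / z.im * ‖(p.1.1 : ℂ) * z + (p.1.2 : ℂ)‖ ^ 2)

/-- The energy `E_κ(z)`. -/
def latE (F : ℝ → ℝ) (κ : ℝ) (z : ℂ) : ℝ :=
  ∑' p : {p : ℤ × ℤ // p ≠ 0},
    ((1 - κ) * F (Real.pi / (2 * z.im) *
        ‖(p.1.1 : ℂ) * (z + 1) + 2 * (p.1.2 : ℂ)‖ ^ 2)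
      + κ * F (Real.pi / z.im * ‖(p.1.1 : ℂ) * z + (p.1.2 : ℂ)‖ ^ 2))

/-- Summability hypothesis: both families are summable for every `z` in the upper half-plane. -/
def SummableHyp (F : ℝ → ℝ) : Prop :=
  ∀ z : ℂ, 0 < z.im →
    Summable (fun p : {p : ℤ × ℤ // p ≠ 0} =>
      F (Real.pi / (2 * z.im) * ‖(p.1.1 : ℂ) * (z + 1) + 2 * (p.1.2 : ℂ)‖ ^ 2)) ∧
    Summable (fun p : {p : ℤ × ℤ // p ≠ 0} =>
      F (Real.pi / z.im * ‖(p.1.1 : ℂ) * z + (p.1.2 : ℂ)‖ ^ 2))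

/- ### Auxiliary machinery -/

def glAux (a b c d ε : ℤ) (h : ε * (a * d - b * c) = 1) : ℤ × ℤ ≃ ℤ × ℤ where
  toFun p := (a * p.1 + b * p.2, c * p.1 + d * p.2)
  invFun p := (ε * d * p.1 - ε * b * p.2, -(ε * c) * p.1 + ε * a * p.2)
  left_inv p := by
    obtain ⟨m, n⟩ := p
    simp only [Prod.mk.injEq]
    exact ⟨by linear_combination m * h, by linear_combination n * h⟩
  right_inv p := by
    obtain ⟨m, n⟩ := p
    simp only [Prod.mk.injEq]
    exact ⟨by linear_combination m * h, by linear_combination n * h⟩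

def glE (a b c d ε : ℤ) (h : ε * (a * d - b * c) = 1) :
    {p : ℤ × ℤ // p ≠ 0} ≃ {p : ℤ × ℤ // p ≠ 0} :=
  (glAux a b c d ε h).subtypeEquiv (fun p => by
    have h0 : glAux a b c d ε h 0 = 0 := by simp [glAux, Prod.ext_iff]
    exact not_congr ⟨fun hp => by rw [hp]; exact h0,
      fun hp => (glAux a b c d ε h).injective (by rw [hp, h0])⟩)

lemma glE_coe (a b c d ε : ℤ) (h : ε * (a * d - b * c) = 1) (p : {p : ℤ × ℤ // p ≠ 0}) :
    (glE a b c d ε h p).1 = (a * p.1.1 + b * p.1.2, c * p.1.1 + d * p.1.2) := rfl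

lemma tsum_glE (g h : {p : ℤ × ℤ // p ≠ 0} → ℝ) (a b c d ε : ℤ) (hd : ε * (a * d - b * c) = 1)
    (key : ∀ p : {p : ℤ × ℤ // p ≠ 0}, g p = h (glE a b c d ε hd p)) :
    ∑' p, g p = ∑' p, h p := by
  rw [tsum_congr key]
  exact (glE a b c d ε hd).tsum_eq h

lemma neg_inv_im (z : ℂ) : (-(1 / z)).im = z.im / Complex.normSq z := by
  simp [one_div, Complex.inv_im, neg_div]

/- ### Invariance of `latE1` -/

lemma latE1_T1 (F : ℝ → ℝ) (z : ℂ) : latE1 F (z + 1) = latE1 F z := by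
  unfold latE1
  refine tsum_glE _ _ 1 0 1 1 1 (by ring) fun p => ?_
  obtain ⟨⟨m, n⟩, hp⟩ := p
  simp only [glE_coe]
  have h1 : (z + 1).im = z.im := by simp
  have h2 : ((m : ℂ)) * (z + 1) + (n : ℂ) = ((1 * m + 0 * n : ℤ) : ℂ) * z + ((1 * m + 1 * n : ℤ) : ℂ) := by
    push_cast; ring
  rw [h1, h2]

lemma latE1_T2 (F : ℝ → ℝ) (z : ℂ) : latE1 F (z + 2) = latE1 F z := by
  unfold latE1
  refine tsum_glE _ _ 1 0 2 1 1 (by ring) fun p => ?_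
  obtain ⟨⟨m, n⟩, hp⟩ := p
  simp only [glE_coe]
  have h1 : (z + 2).im = z.im := by simp
  have h2 : ((m : ℂ)) * (z + 2) + (n : ℂ) = ((1 * m + 0 * n : ℤ) : ℂ) * z + ((2 * m + 1 * n : ℤ) : ℂ) := by
    push_cast; ring
  rw [h1, h2]

lemma latE1_S (F : ℝ → ℝ) (z : ℂ) (hz : 0 < z.im) : latE1 F (-(1 / z)) = latE1 F z := by
  have hz0 : z ≠ 0 := fun h => by simp [h] at hz
  have hN : Complex.normSq z ≠ 0 := (Complex.normSq_pos.mpr hz0).ne'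
  have hy : z.im ≠ 0 := ne_of_gt hz
  unfold latE1
  refine tsum_glE _ _ 0 1 (-1) 0 1 (by ring) fun p => ?_
  obtain ⟨⟨m, n⟩, hp⟩ := p
  simp only [glE_coe]
  congr 1
  have h2 : ((0 * m + 1 * n : ℤ) : ℂ) * z + (((-1) * m + 0 * n : ℤ) : ℂ) = (n : ℂ) * z - (m : ℂ) := by
    push_cast; ring
  have habs : ((m : ℂ)) * (-(1 / z)) + (n : ℂ) = ((n : ℂ) * z - (m : ℂ)) / z := by
    field_simp; ring
  rw [neg_inv_im, h2, habs, norm_div, div_pow]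
  simp only [Complex.sq_norm]
  field_simp

lemma latE1_C (F : ℝ → ℝ) (z : ℂ) : latE1 F (-(starRingEnd ℂ) z) = latE1 F z := by
  unfold latE1
  refine tsum_glE _ _ (-1) 0 0 1 (-1) (by ring) fun p => ?_
  obtain ⟨⟨m, n⟩, hp⟩ := p
  simp only [glE_coe]
  have h1 : (-(starRingEnd ℂ) z).im = z.im := by simp
  have h2 : ((m : ℂ)) * (-(starRingEnd ℂ) z) + (n : ℂ) =
      (starRingEnd ℂ) ((((-1) * m + 0 * n : ℤ) : ℂ) * z + ((0 * m + 1 * n : ℤ) : ℂ)) := by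
    simp only [map_add, map_mul, map_intCast]
    push_cast; ring
  rw [h1, h2, Complex.norm_conj]

/- ### Invariance of `latE0` -/

lemma latE0_T2 (F : ℝ → ℝ) (z : ℂ) : latE0 F (z + 2) = latE0 F z := by
  unfold latE0
  refine tsum_glE _ _ 1 0 1 1 1 (by ring) fun p => ?_
  obtain ⟨⟨m, n⟩, hp⟩ := p
  simp only [glE_coe]
  have h1 : (z + 2).im = z.im := by simp
  have h2 : ((m : ℂ)) * (z + 2 + 1) + 2 * (n : ℂ) =
      ((1 * m + 0 * n : ℤ) : ℂ) * (z + 1) + 2 * ((1 * m + 1 * n : ℤ) : ℂ) := by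
    push_cast; ring
  rw [h1, h2]

lemma latE0_S (F : ℝ → ℝ) (z : ℂ) (hz : 0 < z.im) : latE0 F (-(1 / z)) = latE0 F z := by
  have hz0 : z ≠ 0 := fun h => by simp [h] at hz
  have hN : Complex.normSq z ≠ 0 := (Complex.normSq_pos.mpr hz0).ne'
  have hy : z.im ≠ 0 := ne_of_gt hz
  unfold latE0
  refine tsum_glE _ _ 1 2 (-1) (-1) 1 (by ring) fun p => ?_
  obtain ⟨⟨m, n⟩, hp⟩ := p
  simp only [glE_coe]
  congr 1
  have h2 : ((1 * m + 2 * n : ℤ) : ℂ) * (z + 1) + 2 * (((-1) * m + (-1) * n : ℤ) : ℂ) =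
      ((m : ℂ) + 2 * n) * z - (m : ℂ) := by
    push_cast; ring
  have habs : ((m : ℂ)) * (-(1 / z) + 1) + 2 * (n : ℂ) = (((m : ℂ) + 2 * n) * z - (m : ℂ)) / z := by
    field_simp; ring
  rw [neg_inv_im, h2, habs, norm_div, div_pow]
  simp only [Complex.sq_norm]
  field_simp

lemma latE0_C (F : ℝ → ℝ) (z : ℂ) : latE0 F (-(starRingEnd ℂ) z) = latE0 F z := by
  unfold latE0
  refine tsum_glE _ _ (-1) 0 1 1 (-1) (by ring) fun p => ?_
  obtain ⟨⟨m, n⟩, hp⟩ := p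
  simp only [glE_coe]
  have h1 : (-(starRingEnd ℂ) z).im = z.im := by simp
  have h2 : ((m : ℂ)) * (-(starRingEnd ℂ) z + 1) + 2 * (n : ℂ) =
      (starRingEnd ℂ) ((((-1) * m + 0 * n : ℤ) : ℂ) * (z + 1) + 2 * ((1 * m + 1 * n : ℤ) : ℂ)) := by
    simp only [map_add, map_mul, map_ofNat, map_intCast, map_one]
    push_cast; ring
  rw [h1, h2, Complex.norm_conj]

/- ### Splitting `latE` -/

lemma latE_split (F : ℝ → ℝ) (hS : SummableHyp F) (κ : ℝ) (z : ℂ) (hz : 0 < z.im) :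
    latE F κ z = (1 - κ) * latE0 F z + κ * latE1 F z := by
  unfold latE latE0 latE1
  rw [Summable.tsum_add ((hS z hz).1.mul_left _) ((hS z hz).2.mul_left _), tsum_mul_left, tsum_mul_left]

/-- **Invariance properties** (Lemma 2.1): `E_κ` is invariant under the group generated by
`τ ↦ τ+2`, `τ ↦ −1/τ`, `τ ↦ −conj(τ)`; moreover `E₁` is invariant under `τ ↦ τ+1`. -/
theorem latE_invariance (F : ℝ → ℝ) (hF : CompletelyMonotone F) (hS : SummableHyp F) :
    (∀ κ ∈ Set.Icc (0 : ℝ) 1, ∀ z : ℂ, 0 < z.im →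
      latE F κ (z + 2) = latE F κ z ∧
      latE F κ (-(1 / z)) = latE F κ z ∧
      latE F κ (-(starRingEnd ℂ) z) = latE F κ z) ∧
    (∀ z : ℂ, 0 < z.im → latE F 1 (z + 1) = latE F 1 z) := by
  constructor
  · intro κ _ z hz
    have hz0 : z ≠ 0 := fun h => by simp [h] at hz
    have h1 : (0 : ℝ) < (z + 2).im := by simpa using hz
    have h2 : (0 : ℝ) < (-(1 / z)).im := by
      rw [neg_inv_im]
      exact div_pos hz (Complex.normSq_pos.mpr hz0)
    have h3 : (0 : ℝ) < (-(starRingEnd ℂ) z).im := by simpa using hz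
    refine ⟨?_, ?_, ?_⟩
    · rw [latE_split F hS κ _ h1, latE_split F hS κ _ hz, latE0_T2, latE1_T2]
    · rw [latE_split F hS κ _ h2, latE_split F hS κ _ hz, latE0_S F z hz, latE1_S F z hz]
    · rw [latE_split F hS κ _ h3, latE_split F hS κ _ hz, latE0_C, latE1_C]
  · intro z hz
    have h1 : (0 : ℝ) < (z + 1).im := by simpa using hz
    rw [latE_split F hS 1 _ h1, latE_split F hS 1 _ hz, latE1_T1]
    ring
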